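/- arXiv:1601.05683 — 5 statements merged into one kernel-verified Lean document; each statement's English description precedes it below -/
import Mathlib

section
/- Let T > 0, I = [0,T], g, E ∈ C⁰(I,ℝ), φ ∈ C⁰(I, ℝ₊*), and suppose there exist η > 0 and ḡ ∈ ℝ with |g(t) - ḡ| ≤ η for all t ∈ I. If y solves y(0) = y₀, y'(t) = φ(t)·X₃(g(t) - y(t)) + E(t) on I where X₃(u) = u + u³, then |y(T) - ḡ| ≤ η + ∫₀ᵀ |E(t)| dt + 1/√(exp(2∫₀ᵀ φ(u) du) - 1). -/
/-!
Comparison with an upper barrier `ḡ + η + δ + ∫₀ᵗ |E| + b(∫₀ᵗ φ)`, where `b' = -(b + b³)`.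
Where `y` touches the barrier, `g - y < -b`, so monotonicity of `X₃` makes `y'` strictly smaller
than the barrier's slope and `y` stays below it. The solution `b` may start at any height
`M` above `y 0`: its value at `s > 0` stays below `(e^{2s} - 1)^{-1/2}` uniformly in `M`.
Letting `δ → 0` gives the upper bound, and `-y` gives the lower one.
-/

open Set Real

section ClampedPrimitive

variable {a b t : ℝ} {f : ℝ → ℝ}

/-- A primitive of `f` on `[a, b]` that is differentiable on all of `ℝ` even when `f` is only
continuous on `[a, b]`. -/
noncomputable def clampedPrimitive (hab : a ≤ b) (f : ℝ → ℝ) (u : ℝ) : ℝ :=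
  ∫ s in a..u, IccExtend hab ((Icc a b).domRestrict f) s

lemma hasDerivAt_clampedPrimitive (hab : a ≤ b) (hf : ContinuousOn f (Icc a b))
    (ht : t ∈ Icc a b) : HasDerivAt (clampedPrimitive hab f) (f t) t := by
  have h := ((continuousOn_iff_continuous_domRestrict.mp hf).Icc_extend' (h := hab)
    |>.integral_hasStrictDerivAt a t).hasDerivAt
  rwa [IccExtend_of_mem hab _ ht] at h

lemma clampedPrimitive_left (hab : a ≤ b) : clampedPrimitive hab f a = 0 :=
  intervalIntegral.integral_same

lemma clampedPrimitive_right (hab : a ≤ b) :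
    clampedPrimitive hab f b = ∫ s in a..b, f s :=
  intervalIntegral.integral_congr fun _ hs => IccExtend_of_mem hab _ (uIcc_of_le hab ▸ hs)

lemma clampedPrimitive_nonneg (hab : a ≤ b) (hf : ∀ s ∈ Icc a b, 0 ≤ f s) (ht : a ≤ t) :
    0 ≤ clampedPrimitive hab f t :=
  intervalIntegral.integral_nonneg ht fun s _ => hf _ (projIcc a b hab s).2

end ClampedPrimitive

section RiccatiBarrier

variable {M s : ℝ}

/-- The solution of `b' = -(b + b³)` with `b 0 = M`: the substitution `v = b⁻² + 1` turns the
equation into `v' = 2 v`. -/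
noncomputable def riccatiBarrier (M s : ℝ) : ℝ :=
  1 / √((1 + (M ^ 2)⁻¹) * exp (2 * s) - 1)

lemma riccatiBarrier_zero (hM : 0 < M) : riccatiBarrier M 0 = M := by
  simp [riccatiBarrier, sqrt_inv, sqrt_sq hM.le]

lemma riccatiBarrier_le (hs : 0 < s) : riccatiBarrier M s ≤ 1 / √(exp (2 * s) - 1) := by
  have hexp : 1 < exp (2 * s) := one_lt_exp_iff.mpr (by linarith)
  refine one_div_le_one_div_of_le (sqrt_pos.mpr (by linarith)) (sqrt_le_sqrt ?_)
  have : 0 ≤ (M ^ 2)⁻¹ * exp (2 * s) := by positivity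
  linarith

lemma hasDerivAt_riccatiBarrier (hM : M ≠ 0) (hs : 0 ≤ s) :
    HasDerivAt (riccatiBarrier M) (-(riccatiBarrier M s + riccatiBarrier M s ^ 3)) s := by
  set K := 1 + (M ^ 2)⁻¹
  have hA : 0 < K * exp (2 * s) - 1 := by
    have : 0 < (M ^ 2)⁻¹ := by positivity
    nlinarith [one_le_exp (by linarith : 0 ≤ 2 * s)]
  have hroot : 0 < √(K * exp (2 * s) - 1) := sqrt_pos.mpr hA
  have hd := ((((hasDerivAt_id s).const_mul 2).exp.const_mul K).sub_const 1).sqrt hA.ne'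
  simp only [id, mul_one] at hd
  refine ((hasDerivAt_const s (1 : ℝ)).div hd hroot.ne').congr_deriv ?_
  set r := √(K * exp (2 * s) - 1) with hr
  have hKe : K * (exp (2 * s) * 2) = 2 * (r ^ 2 + 1) := by rw [hr, sq_sqrt hA.le]; ring
  change _ = -(1 / r + (1 / r) ^ 3)
  rw [hKe]
  field_simp
  ring

end RiccatiBarrier

section ReachODE

variable {T η gbar : ℝ} {g E φ y : ℝ → ℝ}

lemma reach_ode_le_barrier (hT : 0 ≤ T) (hE : ContinuousOn E (Icc 0 T))
    (hφc : ContinuousOn φ (Icc 0 T)) (hφpos : ∀ t ∈ Icc (0:ℝ) T, 0 < φ t)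
    (hgbar : ∀ t ∈ Icc (0:ℝ) T, g t - gbar ≤ η)
    (hy : ∀ t ∈ Icc (0:ℝ) T, HasDerivAt y (φ t * ((g t - y t) + (g t - y t) ^ 3) + E t) t)
    {δ M : ℝ} (hδ : 0 < δ) (hM : 0 < M) (h0 : y 0 ≤ gbar + η + δ + M) :
    ∀ t ∈ Icc 0 T, y t ≤ gbar + η + δ + clampedPrimitive hT (|E ·|) t +
      riccatiBarrier M (clampedPrimitive hT φ t) := by
  set F := clampedPrimitive hT (|E ·|)
  set Φ := clampedPrimitive hT φ
  have hΦ_nonneg : ∀ t ∈ Icc 0 T, 0 ≤ Φ t := fun t ht =>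
    clampedPrimitive_nonneg hT (fun s hs => (hφpos s hs).le) ht.1
  have hbarrier : ∀ t ∈ Icc 0 T, HasDerivAt (fun t => gbar + η + δ + F t + riccatiBarrier M (Φ t))
      (|E t| + -(riccatiBarrier M (Φ t) + riccatiBarrier M (Φ t) ^ 3) * φ t) t := fun t ht =>
    ((hasDerivAt_clampedPrimitive hT hE.abs ht).const_add _).add
      ((hasDerivAt_riccatiBarrier hM.ne' (hΦ_nonneg t ht)).comp t
        (hasDerivAt_clampedPrimitive hT hφc ht))
  refine image_le_of_deriv_right_lt_deriv_boundary'
    (fun t ht => (hy t ht).continuousAt.continuousWithinAt)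
    (fun t ht => (hy t (Ico_subset_Icc_self ht)).hasDerivWithinAt) ?_
    (fun t ht => (hbarrier t ht).continuousAt.continuousWithinAt)
    (fun t ht => (hbarrier t (Ico_subset_Icc_self ht)).hasDerivWithinAt) ?_
  · simpa [F, Φ, clampedPrimitive_left hT, riccatiBarrier_zero hM] using h0
  · intro t ht hyt
    have ht' := Ico_subset_Icc_self ht
    set b := riccatiBarrier M (Φ t)
    have hF : 0 ≤ F t := clampedPrimitive_nonneg hT (fun s _ => abs_nonneg _) ht'.1
    have hgap : g t - y t < -b := by linarith [hgbar t ht']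
    have hX : (g t - y t) + (g t - y t) ^ 3 < -(b + b ^ 3) := by
      have := (strictMono_id.add (Odd.strictMono_pow (R := ℝ) (n := 3) (by decide))) hgap
      simp only [id] at this
      linarith
    nlinarith [mul_lt_mul_of_pos_left hX (hφpos t ht'), le_abs_self (E t)]

lemma reach_ode_sub_le (hT : 0 < T) (hE : ContinuousOn E (Icc 0 T))
    (hφc : ContinuousOn φ (Icc 0 T)) (hφpos : ∀ t ∈ Icc (0:ℝ) T, 0 < φ t)
    (hgbar : ∀ t ∈ Icc (0:ℝ) T, g t - gbar ≤ η)
    (hy : ∀ t ∈ Icc (0:ℝ) T, HasDerivAt y (φ t * ((g t - y t) + (g t - y t) ^ 3) + E t) t) :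
    y T - gbar ≤ η + (∫ t in (0:ℝ)..T, |E t|) +
      1 / √(exp (2 * ∫ u in (0:ℝ)..T, φ u) - 1) := by
  have hΦ : 0 < ∫ u in (0:ℝ)..T, φ u :=
    intervalIntegral.intervalIntegral_pos_of_pos_on (hφc.intervalIntegrable_of_Icc hT.le)
      (fun t ht => hφpos t (Ioo_subset_Icc_self ht)) hT
  refine le_of_forall_pos_le_add fun δ hδ => ?_
  set M := max 1 (y 0 - gbar - η)
  have hM : 0 < M := lt_max_of_lt_left one_pos
  have hbound := reach_ode_le_barrier hT.le hE hφc hφpos hgbar hy hδ hM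
    (by linarith [le_max_right 1 (y 0 - gbar - η)]) T (right_mem_Icc.mpr hT.le)
  rw [clampedPrimitive_right hT.le, clampedPrimitive_right hT.le] at hbound
  linarith [riccatiBarrier_le (M := M) hΦ]

end ReachODE

theorem reach_ode_integral_error_general (T : ℝ) (hT : 0 < T)
    (g E φ : ℝ → ℝ)
    (hE : ContinuousOn E (Set.Icc 0 T))
    (hφc : ContinuousOn φ (Set.Icc 0 T))
    (hφpos : ∀ t ∈ Set.Icc (0:ℝ) T, 0 < φ t)
    (η gbar : ℝ)
    (hgbar : ∀ t ∈ Set.Icc (0:ℝ) T, |g t - gbar| ≤ η)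
    (y : ℝ → ℝ)
    (hy : ∀ t ∈ Set.Icc (0:ℝ) T,
      HasDerivAt y (φ t * ((g t - y t) + (g t - y t)^3) + E t) t) :
    |y T - gbar| ≤ η + (∫ t in (0:ℝ)..T, |E t|) +
      1 / Real.sqrt (Real.exp (2 * ∫ u in (0:ℝ)..T, φ u) - 1) := by
  have hupper := reach_ode_sub_le hT hE hφc hφpos (fun t ht => (abs_le.mp (hgbar t ht)).2) hy
  -- `-y` solves the same equation with data `-g`, `-E`, `-gbar`
  have hlower := reach_ode_sub_le (g := (-g ·)) (E := (-E ·)) (η := η) (gbar := -gbar)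
    (y := (-y ·)) hT hE.neg hφc hφpos
    (fun t ht => by linarith [(abs_le.mp (hgbar t ht)).1])
    (fun t ht => (hy t ht).neg.congr_deriv (by ring))
  simp only [abs_neg] at hlower
  exact abs_le.mpr ⟨by linarith, hupper⟩

/-- Reach ODE: integral error bound at time T. -/
theorem reach_ode_integral_error (T : ℝ) (hT : 0 < T)
    (g E φ : ℝ → ℝ)
    (hg : ContinuousOn g (Set.Icc 0 T)) (hE : ContinuousOn E (Set.Icc 0 T))
    (hφc : ContinuousOn φ (Set.Icc 0 T))
    (hφpos : ∀ t ∈ Set.Icc (0:ℝ) T, 0 < φ t)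
    (η gbar : ℝ) (hη : 0 < η)
    (hgbar : ∀ t ∈ Set.Icc (0:ℝ) T, |g t - gbar| ≤ η)
    (y : ℝ → ℝ) (y₀ : ℝ) (hy0 : y 0 = y₀)
    (hy : ∀ t ∈ Set.Icc (0:ℝ) T,
      HasDerivAt y (φ t * ((g t - y t) + (g t - y t)^3) + E t) t) :
    |y T - gbar| ≤ η + (∫ t in (0:ℝ)..T, |E t|) +
      1 / Real.sqrt (Real.exp (2 * ∫ u in (0:ℝ)..T, φ u) - 1) :=
  reach_ode_integral_error_general T hT g E φ hE hφc hφpos η gbar hgbar y hy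
end

section
/- Under the hypotheses of the previous lemma (|g(t) - ḡ| ≤ η on I = [0,T], y solves y' = φ·X₃(g - y) + E with X₃(u)=u+u³), for every t ∈ I one has |y(t) - ḡ| ≤ max(η, |y(0) - ḡ|) + ∫₀ᵗ |E(u)| du. -/
/-!
Set `d = y - ḡ`. Where `d > η ≥ |g - ḡ|` the drift `φ · X₃(g - y)` is negative, since `X₃` has the
sign of its argument, so only the forcing `E` can push `d` upwards; symmetrically where `d < -η`.
A fencing argument against the barrier `max η |d 0| + ε (1 + t) + ∫₀ᵗ |E|` and `ε → 0` give the
bound.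
-/

open Set Topology intervalIntegral

theorem hasDerivWithinAt_Ici_primitive_of_continuousOn {e : ℝ → ℝ} {a b x : ℝ}
    (he : ContinuousOn e (Icc a b)) (hx : x ∈ Ico a b) :
    HasDerivWithinAt (fun u => ∫ t in a..u, e t) (e x) (Ici x) x := by
  have hIcc : Icc a b ∈ 𝓝[>] x := Icc_mem_nhdsGT_of_mem hx
  refine integral_hasDerivWithinAt_right (t := Ioi x)
    ((he.mono (Icc_subset_Icc_right hx.2.le)).intervalIntegrable_of_Icc hx.1)
    ((he.stronglyMeasurableAtFilter_nhdsWithin measurableSet_Icc x).filter_mono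
      (nhdsWithin_le_of_mem hIcc)) ?_
  exact (he x (Ico_subset_Icc_self hx)).mono_of_mem_nhdsWithin hIcc

theorem le_max_add_integral_of_hasDerivWithinAt {f f' e : ℝ → ℝ} {a b M : ℝ}
    (hf : ContinuousOn f (Icc a b)) (hf' : ∀ x ∈ Ico a b, HasDerivWithinAt f (f' x) (Ici x) x)
    (he : ContinuousOn e (Icc a b)) (he_nonneg : ∀ x ∈ Icc a b, 0 ≤ e x)
    (bound : ∀ x ∈ Ico a b, M < f x → f' x ≤ e x) :
    ∀ x ∈ Icc a b, f x ≤ max M (f a) + ∫ t in a..x, e t := by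
  intro x hx
  set C := max M (f a)
  set P : ℝ → ℝ := fun u => ∫ t in a..u, e t
  have hab : a ≤ b := hx.1.trans hx.2
  have hP_cont : ContinuousOn P (Icc a b) := by
    simpa only [uIcc_of_le hab] using
      continuousOn_primitive_interval' (he.intervalIntegrable_of_Icc hab) left_mem_uIcc
  have hP_nonneg : ∀ u ∈ Icc a b, 0 ≤ P u := fun u hu =>
    integral_nonneg hu.1 fun t ht => he_nonneg t ⟨ht.1, ht.2.trans hu.2⟩
  have fence : ∀ ε > 0, f x ≤ C + ε * (1 + (x - a)) + P x := by
    intro ε hε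
    refine image_le_of_deriv_right_lt_deriv_boundary' hf hf'
      (B := fun u => C + ε * (1 + (u - a)) + P u) (B' := fun u => ε + e u) ?_
      ((continuousOn_const.add (by fun_prop)).add hP_cont) ?_ ?_ hx
    · simp only [sub_self, add_zero, mul_one, P, integral_same]
      linarith [le_max_right M (f a)]
    · intro u hu
      have hlin : HasDerivAt (fun u => C + ε * (1 + (u - a))) ε u := by
        simpa using (((hasDerivAt_id u).sub_const a).const_add 1).const_mul ε |>.const_add C
      exact hlin.hasDerivWithinAt.add (hasDerivWithinAt_Ici_primitive_of_continuousOn he hu)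
    · intro u hu hfu
      have hu' := Ico_subset_Icc_self hu
      have : M < f u := by
        have : 0 < ε * (1 + (u - a)) := mul_pos hε (by linarith [hu.1])
        linarith [le_max_left M (f a), hP_nonneg u hu']
      linarith [bound u hu this]
  refine le_of_forall_pos_le_add fun δ hδ => ?_
  have hlen : 0 < 1 + (x - a) := by linarith [hx.1]
  have := fence (δ / (1 + (x - a))) (div_pos hδ hlen)
  rw [div_mul_cancel₀ δ hlen.ne'] at this
  linarith

theorem abs_le_max_add_integral_of_hasDerivWithinAt {f f' e : ℝ → ℝ} {a b M : ℝ}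
    (hf : ContinuousOn f (Icc a b)) (hf' : ∀ x ∈ Ico a b, HasDerivWithinAt f (f' x) (Ici x) x)
    (he : ContinuousOn e (Icc a b)) (he_nonneg : ∀ x ∈ Icc a b, 0 ≤ e x)
    (bound_above : ∀ x ∈ Ico a b, M < f x → f' x ≤ e x)
    (bound_below : ∀ x ∈ Ico a b, f x < -M → -e x ≤ f' x) :
    ∀ x ∈ Icc a b, |f x| ≤ max M |f a| + ∫ t in a..x, e t := by
  intro x hx
  have upper := le_max_add_integral_of_hasDerivWithinAt hf hf' he he_nonneg bound_above x hx
  have lower := le_max_add_integral_of_hasDerivWithinAt (f := -f) (f' := -f') hf.neg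
    (fun x hx => (hf' x hx).neg) he he_nonneg
    (fun x hx hfx => neg_le.mp (bound_below x hx (lt_neg.mp hfx))) x hx
  have h_max : max M (f a) ≤ max M |f a| := max_le_max le_rfl (le_abs_self _)
  have h_max_neg : max M (-f a) ≤ max M |f a| := max_le_max le_rfl (neg_le_abs _)
  simp only [Pi.neg_apply] at lower
  exact abs_le.mpr ⟨by linarith, by linarith⟩

theorem reach_ode_pointwise_bound_general (T : ℝ)
    (g E φ : ℝ → ℝ)
    (hE : ContinuousOn E (Set.Icc 0 T))
    (hφpos : ∀ t ∈ Set.Icc (0:ℝ) T, 0 < φ t)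
    (η gbar : ℝ)
    (hgbar : ∀ t ∈ Set.Icc (0:ℝ) T, |g t - gbar| ≤ η)
    (y : ℝ → ℝ)
    (hy : ∀ t ∈ Set.Icc (0:ℝ) T,
      HasDerivAt y (φ t * ((g t - y t) + (g t - y t)^3) + E t) t) :
    ∀ t ∈ Set.Icc (0:ℝ) T,
      |y t - gbar| ≤ max η |y 0 - gbar| + ∫ u in (0:ℝ)..t, |E u| := by
  refine abs_le_max_add_integral_of_hasDerivWithinAt (f := fun s => y s - gbar)
    (fun x hx => ((hy x hx).sub_const gbar).continuousAt.continuousWithinAt)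
    (fun x hx => ((hy x (Ico_subset_Icc_self hx)).sub_const gbar).hasDerivWithinAt)
    hE.abs (fun _ _ => abs_nonneg _) ?_ ?_
  · intro x hx hyx
    have hx' := Ico_subset_Icc_self hx
    have hu : g x - y x < 0 := by linarith [(abs_le.mp (hgbar x hx')).2]
    have drift : φ x * ((g x - y x) + (g x - y x) ^ 3) < 0 :=
      mul_neg_of_pos_of_neg (hφpos x hx') (add_neg hu (Odd.pow_neg (by decide) hu))
    linarith [le_abs_self (E x)]
  · intro x hx hyx
    have hx' := Ico_subset_Icc_self hx
    have hu : 0 < g x - y x := by linarith [(abs_le.mp (hgbar x hx')).1]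
    have drift : 0 < φ x * ((g x - y x) + (g x - y x) ^ 3) :=
      mul_pos (hφpos x hx') (add_pos hu (pow_pos hu 3))
    linarith [neg_abs_le (E x)]

/-- Reach ODE: pointwise bound by max of η and initial deviation plus integral error. -/
theorem reach_ode_pointwise_bound (T : ℝ) (hT : 0 < T)
    (g E φ : ℝ → ℝ)
    (hg : ContinuousOn g (Set.Icc 0 T)) (hE : ContinuousOn E (Set.Icc 0 T))
    (hφc : ContinuousOn φ (Set.Icc 0 T))
    (hφpos : ∀ t ∈ Set.Icc (0:ℝ) T, 0 < φ t)
    (η gbar : ℝ) (hη : 0 < η)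
    (hgbar : ∀ t ∈ Set.Icc (0:ℝ) T, |g t - gbar| ≤ η)
    (y : ℝ → ℝ)
    (hy : ∀ t ∈ Set.Icc (0:ℝ) T,
      HasDerivAt y (φ t * ((g t - y t) + (g t - y t)^3) + E t) t) :
    ∀ t ∈ Set.Icc (0:ℝ) T,
      |y t - gbar| ≤ max η |y 0 - gbar| + ∫ u in (0:ℝ)..t, |E u| :=
  reach_ode_pointwise_bound_general T g E φ hE hφpos η gbar hgbar y hy
end

section
/- Let φ ∈ C⁰(ℝ₊, ℝ₊) and ψ(t) = ∫₀ᵗ φ(u) du, and assume ψ is strictly increasing. Let p be a polynomial vector field, e ∈ C⁰(ℝ₊, ℝᵈ), x₀ ∈ ℝᵈ. If y solves y(0) = x₀, y'(t) = p(y(t)) + (ψ⁻¹)'(t)·e(ψ⁻¹(t)) and z solves z(0) = x₀, z'(t) = φ(t)·p(z(t)) + e(t), then z(t) = y(ψ(t)) for all t ≥ 0. -/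
open Set NNReal

/-- Smoothness of multivariate polynomial evaluation. -/
lemma contDiff_mveval {d : ℕ} (q : MvPolynomial (Fin d) ℝ) :
    ContDiff ℝ (⊤ : ℕ∞) (fun x : Fin d → ℝ => MvPolynomial.eval x q) := by
  induction q using MvPolynomial.induction_on with
  | C a => simpa using contDiff_const (c := a)
  | add q r hq hr => simpa using hq.add hr
  | mul_X q n hq =>
    simp only [map_mul, MvPolynomial.eval_X]
    exact hq.mul (contDiff_apply ℝ ℝ n)

/-- Perturbed time-scaling: z(t) = y(ψ(t)) where ψ(t) = ∫₀ᵗ φ. -/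
theorem perturbed_time_scaling (d : ℕ)
    (p : Fin d → MvPolynomial (Fin d) ℝ)
    (φ : ℝ → ℝ) (hφc : Continuous φ) (hφ0 : ∀ t ≥ (0:ℝ), 0 ≤ φ t)
    (ψ ψinv ψinv' : ℝ → ℝ)
    (hψ : ∀ t, ψ t = ∫ u in (0:ℝ)..t, φ u)
    (hmono : StrictMonoOn ψ (Set.Ici 0))
    (hinv : ∀ t ≥ (0:ℝ), ψinv (ψ t) = t)
    (hinvd : ∀ t ≥ (0:ℝ), HasDerivAt ψinv (ψinv' (ψ t)) (ψ t))
    (e : ℝ → Fin d → ℝ) (he : Continuous e)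
    (x₀ : Fin d → ℝ) (y z : ℝ → Fin d → ℝ)
    (hy0 : y 0 = x₀) (hz0 : z 0 = x₀)
    (hy : ∀ s ≥ (0:ℝ), HasDerivAt y
      ((fun i => MvPolynomial.eval (y s) (p i)) + ψinv' s • e (ψinv s)) s)
    (hz : ∀ t ≥ (0:ℝ), HasDerivAt z
      (φ t • (fun i => MvPolynomial.eval (z t) (p i)) + e t) t) :
    ∀ t ≥ (0:ℝ), z t = y (ψ t) := by
  -- derivative of ψ
  have hψfun : ψ = fun t => ∫ u in (0:ℝ)..t, φ u := funext hψ
  have hψd : ∀ t : ℝ, HasDerivAt ψ (φ t) t := by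
    intro t
    rw [hψfun]
    exact (hφc.integral_hasStrictDerivAt 0 t).hasDerivAt
  have hψ0 : ψ 0 = 0 := by rw [hψ]; simp
  have hψnn : ∀ t ≥ (0:ℝ), 0 ≤ ψ t := by
    intro t ht
    have := hmono.monotoneOn (self_mem_Ici) ht ht
    rwa [hψ0] at this
  -- key identity: ψinv' (ψ t) * φ t = 1
  have hkey : ∀ t ≥ (0:ℝ), ψinv' (ψ t) * φ t = 1 := by
    intro t ht
    have h1 : HasDerivAt (ψinv ∘ ψ) (ψinv' (ψ t) * φ t) t :=
      (hinvd t ht).comp t (hψd t)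
    have h2 : HasDerivWithinAt (fun s : ℝ => s) (ψinv' (ψ t) * φ t) (Ici 0) t :=
      h1.hasDerivWithinAt.congr (fun s hs => (hinv s hs).symm) (hinv t ht).symm
    have h3 : HasDerivWithinAt (fun s : ℝ => s) 1 (Ici 0) t :=
      (hasDerivAt_id t).hasDerivWithinAt
    have hu : UniqueDiffWithinAt ℝ (Ici (0:ℝ)) t := uniqueDiffOn_Ici 0 t ht
    rw [← h2.derivWithin hu, ← h3.derivWithin hu]
  -- the polynomial vector field
  set P : (Fin d → ℝ) → (Fin d → ℝ) := fun x i => MvPolynomial.eval x (p i) with hP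
  have hPcd : ContDiff ℝ (⊤ : ℕ∞) P := contDiff_pi.2 fun i => contDiff_mveval (p i)
  -- w = y ∘ ψ solves the same ODE as z
  set w : ℝ → Fin d → ℝ := fun t => y (ψ t) with hw
  have hw' : ∀ t ≥ (0:ℝ), HasDerivAt w (φ t • P (w t) + e t) t := by
    intro t ht
    have h1 : HasDerivAt (fun s => y (ψ s))
        (φ t • (P (y (ψ t)) + ψinv' (ψ t) • e (ψinv (ψ t)))) t :=
      (hy (ψ t) (hψnn t ht)).scomp t (hψd t)
    have h2 : φ t • (P (y (ψ t)) + ψinv' (ψ t) • e (ψinv (ψ t)))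
        = φ t • P (w t) + e t := by
      rw [hinv t ht, smul_add, smul_smul, mul_comm, hkey t ht, one_smul]
    rw [h2] at h1
    exact h1
  have hw0 : w 0 = x₀ := by rw [hw]; simp [hψ0, hy0]
  -- now fix a final time T and prove uniqueness on [0, T]
  intro T hT
  rcases eq_or_lt_of_le hT with hT0 | hTpos
  · rw [← hT0, hψ0, hz0, hy0]
  -- continuity of z and w on [0, T]
  have hzc : ContinuousOn z (Icc 0 T) := fun t ht => (hz t ht.1).continuousAt.continuousWithinAt
  have hwc : ContinuousOn w (Icc 0 T) := fun t ht => (hw' t ht.1).continuousAt.continuousWithinAt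
  -- bound the trajectories
  obtain ⟨R1, hR1⟩ := isCompact_Icc.exists_bound_of_continuousOn hzc
  obtain ⟨R2, hR2⟩ := isCompact_Icc.exists_bound_of_continuousOn hwc
  set R : ℝ := max R1 R2 with hRdef
  set B : Set (Fin d → ℝ) := Metric.closedBall 0 R with hB
  have hzB : ∀ t ∈ Icc (0:ℝ) T, z t ∈ B := fun t ht => by
    rw [hB, Metric.mem_closedBall, dist_zero_right]
    exact le_trans (hR1 t ht) (le_max_left _ _)
  have hwB : ∀ t ∈ Icc (0:ℝ) T, w t ∈ B := fun t ht => by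
    rw [hB, Metric.mem_closedBall, dist_zero_right]
    exact le_trans (hR2 t ht) (le_max_right _ _)
  -- Lipschitz constant of P on B
  have hfd : Continuous (fderiv ℝ P) := (hPcd.continuous_fderiv (by simp))
  obtain ⟨C, hC⟩ := (isCompact_closedBall (0 : Fin d → ℝ) R).exists_bound_of_continuousOn
    (Continuous.continuousOn hfd)
  set Cn : ℝ≥0 := ⟨max C 0, le_max_right _ _⟩ with hCn
  have hPlip : LipschitzOnWith Cn P B := by
    apply (convex_closedBall _ _).lipschitzOnWith_of_nnnorm_fderiv_le
      (fun x _ => (hPcd.differentiable (by simp)).differentiableAt)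
    intro x hx
    have : ‖fderiv ℝ P x‖ ≤ max C 0 := le_trans (hC x hx) (le_max_left _ _)
    exact this
  -- bound on φ on [0, T]
  obtain ⟨M, hM⟩ := isCompact_Icc.exists_bound_of_continuousOn
    (Continuous.continuousOn hφc (s := Icc (0:ℝ) T))
  set M' : ℝ := max M 0 with hM'
  -- the vector field, with time clamped to [0, T]
  set v : ℝ → (Fin d → ℝ) → (Fin d → ℝ) :=
    fun t x => φ (min (max t 0) T) • P x + e t with hv
  have hclamp : ∀ t ∈ Icc (0:ℝ) T, min (max t 0) T = t := by
    intro t ht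
    rw [max_eq_left ht.1, min_eq_left ht.2]
  have hclamp_mem : ∀ t : ℝ, min (max t 0) T ∈ Icc (0:ℝ) T := by
    intro t
    constructor
    · exact le_min (le_max_right _ _) hT
    · exact min_le_right _ _
  set K : ℝ≥0 := Real.toNNReal (M' * max C 0) with hKdef
  have hKcoe : (K : ℝ) = M' * max C 0 :=
    Real.coe_toNNReal _ (mul_nonneg (le_max_right _ _) (le_max_right _ _))
  have hvlip : ∀ t, LipschitzOnWith K (v t) B := by
    intro t
    apply LipschitzOnWith.of_dist_le_mul
    intro x hx x' hx'
    have hc : |φ (min (max t 0) T)| ≤ M' :=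
      le_trans (hM _ (hclamp_mem t)) (le_max_left _ _)
    have h1 : dist (v t x) (v t x') = |φ (min (max t 0) T)| * dist (P x) (P x') := by
      simp only [hv, dist_add_right, dist_smul₀, Real.norm_eq_abs]
    have h2 : dist (P x) (P x') ≤ max C 0 * dist x x' := by
      have := hPlip.dist_le_mul x hx x' hx'
      rwa [hCn] at this
    rw [h1, hKcoe, mul_assoc]
    exact mul_le_mul hc h2 dist_nonneg (le_max_right _ _)
  -- apply uniqueness of ODE solutions
  have hz' : ∀ t ∈ Ico (0:ℝ) T, HasDerivWithinAt z (v t (z t)) (Ici t) t := by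
    intro t ht
    have h := (hz t ht.1).hasDerivWithinAt (s := Ici t)
    have : v t (z t) = φ t • P (z t) + e t := by
      rw [hv]; simp only [hclamp t (Ico_subset_Icc_self ht)]
    rw [this]
    exact h
  have hw'' : ∀ t ∈ Ico (0:ℝ) T, HasDerivWithinAt w (v t (w t)) (Ici t) t := by
    intro t ht
    have h := (hw' t ht.1).hasDerivWithinAt (s := Ici t)
    have : v t (w t) = φ t • P (w t) + e t := by
      rw [hv]; simp only [hclamp t (Ico_subset_Icc_self ht)]
    rw [this]
    exact h
  have heq : EqOn z w (Icc 0 T) :=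
    ODE_solution_unique_of_mem_Icc_right (fun t _ => hvlip t) hzc hz'
      (fun t ht => hzB t (Ico_subset_Icc_self ht)) hwc hw''
      (fun t ht => hwB t (Ico_subset_Icc_self ht)) (hz0.trans hw0.symm)
  exact heq ⟨hT, le_rfl⟩
end

section
/- (Slow-stop time change lower bound) Let T ≥ 0 and A : ℝ₊ → ℝ satisfy A(t) ≥ T + 1 - t for all t ∈ [0, T+1]. Define f(t) = (1 + tanh(A(t)))/2 and ψ(t) = ∫₀ᵗ f(u) du. Then f(t) ≥ 1 - (1/2)e^{t-T-1} on [0,T+1] and ψ(T+1) ≥ T + 1 + (1/2)(1 - e^{-1-T}) - 1 ≥ T. -/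
/-! Since `1 - tanh x ≤ e^{-x}` for every real `x`, the hypothesis `T + 1 - t ≤ A t` gives the
pointwise minorant `1 - e^{t-T-1}/2` of the integrand; its integral over `[0, T + 1]` is
`T + 1 - (1 - e^{-T-1})/2`, which dominates the stated bound. -/

open Real

@[fun_prop]
theorem Real.continuous_tanh : Continuous tanh := by
  simp only [funext tanh_eq_sinh_div_cosh]
  exact continuous_sinh.div continuous_cosh fun x => (cosh_pos x).ne'

-- `1 - tanh x = 2 / (e^{2x} + 1)`, and `2 e^x ≤ e^{2x} + 1` is AM-GM.
theorem Real.one_sub_tanh_le_exp_neg (x : ℝ) : 1 - tanh x ≤ exp (-x) := by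
  have hx : 0 < exp x := exp_pos x
  rw [tanh_eq, exp_neg, one_sub_div (by positivity), div_le_iff₀ (by positivity)]
  field_simp
  nlinarith [sq_nonneg (exp x - 1)]

theorem integral_one_sub_half_exp_sub (b : ℝ) :
    ∫ u in (0:ℝ)..b, (1 - (1 / 2) * exp (u - b)) = b - (1 / 2) * (1 - exp (-b)) := by
  rw [intervalIntegral.integral_sub intervalIntegrable_const
      (Continuous.intervalIntegrable (by fun_prop) _ _),
    intervalIntegral.integral_const_mul, intervalIntegral.integral_comp_sub_right (fun u => exp u),
    integral_exp]
  simp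

/-- Slow-stop time change: lower bounds on f and ψ(T+1). -/
theorem slowstop_lower_bound (T : ℝ) (hT : 0 ≤ T)
    (A : ℝ → ℝ) (hAc : Continuous A)
    (hA : ∀ t ∈ Set.Icc (0:ℝ) (T + 1), T + 1 - t ≤ A t) :
    (∀ t ∈ Set.Icc (0:ℝ) (T + 1),
      1 - (1 / 2) * Real.exp (t - T - 1) ≤ (1 + Real.tanh (A t)) / 2) ∧
    (T + 1 + (1 / 2) * (1 - Real.exp (-1 - T)) - 1 ≤
      ∫ u in (0:ℝ)..(T + 1), (1 + Real.tanh (A u)) / 2) ∧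
    (T ≤ T + 1 + (1 / 2) * (1 - Real.exp (-1 - T)) - 1) := by
  have hf : ∀ t ∈ Set.Icc (0:ℝ) (T + 1),
      1 - (1 / 2) * exp (t - T - 1) ≤ (1 + tanh (A t)) / 2 := fun t ht => by
    have hexp : exp (-A t) ≤ exp (t - T - 1) := exp_le_exp.mpr (by linarith [hA t ht])
    linarith [one_sub_tanh_le_exp_neg (A t)]
  have hexp : exp (-1 - T) ≤ 1 := exp_le_one_iff.mpr (by linarith)
  refine ⟨hf, ?_, by linarith⟩
  calc T + 1 + (1 / 2) * (1 - exp (-1 - T)) - 1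
      ≤ ∫ u in (0:ℝ)..(T + 1), (1 - (1 / 2) * exp (u - (T + 1))) := by
        rw [integral_one_sub_half_exp_sub, show -(T + 1) = -1 - T by ring]
        linarith [exp_pos (-1 - T)]
    _ ≤ ∫ u in (0:ℝ)..(T + 1), (1 + tanh (A u)) / 2 := by
        refine intervalIntegral.integral_mono_on (by linarith)
          (Continuous.intervalIntegrable (by fun_prop) _ _)
          (Continuous.intervalIntegrable (by fun_prop) _ _) fun t ht => ?_
        simpa only [sub_sub] using hf t ht
end

section
/- For the equation x(0) = x₀, x'(t) = X₃(x∞ - x(t)) with X₃(u) = u + u³, the unique solution is x(t) = x∞ + (x₀ - x∞)/√((e^{2t} - 1)(1 + (x₀ - x∞)²) + 1), and it satisfies |x(t) - x∞| ≤ 1/√(e^{2t} - 1) for all t > 0 and min(0, x₀ - x∞) ≤ x(t) - x∞ ≤ max(0, x₀ - x∞) for all t ≥ 0. -/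
/-!
Writing `u = x - x∞`, the equation is `u' = -(u + u³)`. Away from `u = 0` the function `w = u⁻²`
solves the linear equation `w' = 2w + 2`, so `w = (c⁻² + 1) e^{2t} - 1` with `c = x₀ - x∞`, which
is the closed form `u = c / √D` with `D = (e^{2t} - 1)(1 + c²) + 1`. Since `D ≥ 1` and
`D ≥ c² (e^{2t} - 1)` for `t ≥ 0`, both bounds follow. Uniqueness holds because the vector field
is decreasing: for two solutions `x, y`, the derivative `2 (x - y)(F x - F y)` of `(x - y)²` is
nonpositive.
-/

open Real Set

theorem eq_of_hasDerivAt_of_antitone {F : ℝ → ℝ} (hF : Antitone F) {x y : ℝ → ℝ} {a : ℝ}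
    (hx : ∀ t ≥ a, HasDerivAt x (F (x t)) t) (hy : ∀ t ≥ a, HasDerivAt y (F (y t)) t)
    (ha : x a = y a) : ∀ t ≥ a, x t = y t := by
  have hd : ∀ t ≥ a, HasDerivAt (fun t => (x t - y t) ^ 2)
      (2 * ((F (x t) - F (y t)) * (x t - y t))) t := fun t ht => by
    refine (((hx t ht).sub (hy t ht)).pow 2).congr_deriv ?_
    simp only [Pi.sub_apply]
    ring
  have hanti : AntitoneOn (fun t => (x t - y t) ^ 2) (Ici a) := by
    refine antitoneOn_of_hasDerivWithinAt_nonpos (convex_Ici a)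
      (fun t ht => (hd t ht).continuousAt.continuousWithinAt)
      (fun t ht => (hd t (interior_subset ht)).hasDerivWithinAt) fun t _ => ?_
    have := (hF.antivary monotone_id).sub_mul_sub_nonpos (y t) (x t)
    simp only [id] at this
    linarith
  intro t ht
  have hsq : (x t - y t) ^ 2 ≤ 0 := by simpa [ha] using hanti self_mem_Ici ht ht
  nlinarith [sq_nonneg (x t - y t)]

theorem antitone_sub_add_sub_pow_three (b : ℝ) :
    Antitone fun u : ℝ => (b - u) + (b - u) ^ 3 :=
  (monotone_id.add (Odd.strictMono_pow (by decide : Odd 3)).monotone).comp_antitone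
    fun _ _ h => sub_le_sub_left h b

noncomputable def cubicDecayDenom (c t : ℝ) : ℝ := (exp (2 * t) - 1) * (1 + c ^ 2) + 1

noncomputable def cubicDecay (c t : ℝ) : ℝ := c / √(cubicDecayDenom c t)

theorem one_le_cubicDecayDenom (c : ℝ) {t : ℝ} (ht : 0 ≤ t) : 1 ≤ cubicDecayDenom c t := by
  have : 1 ≤ exp (2 * t) := one_le_exp (by linarith)
  unfold cubicDecayDenom
  nlinarith [sq_nonneg c]

theorem hasDerivAt_cubicDecayDenom (c t : ℝ) :
    HasDerivAt (cubicDecayDenom c) (2 * (cubicDecayDenom c t + c ^ 2)) t := by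
  have he := (hasDerivAt_exp (2 * t)).comp t ((hasDerivAt_id t).const_mul 2)
  refine (((he.sub_const 1).mul_const (1 + c ^ 2)).add_const 1).congr_deriv ?_
  simp only [cubicDecayDenom]
  ring

theorem cubicDecay_zero (c : ℝ) : cubicDecay c 0 = c := by
  simp [cubicDecay, cubicDecayDenom]

theorem hasDerivAt_cubicDecay (c : ℝ) {t : ℝ} (hD : 0 < cubicDecayDenom c t) :
    HasDerivAt (cubicDecay c) (-(cubicDecay c t + cubicDecay c t ^ 3)) t := by
  have hs : √(cubicDecayDenom c t) ≠ 0 := (sqrt_pos.2 hD).ne'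
  have hsq : √(cubicDecayDenom c t) ^ 2 = cubicDecayDenom c t := sq_sqrt hD.le
  have hsqrt := (hasDerivAt_sqrt hD.ne').comp t (hasDerivAt_cubicDecayDenom c t)
  refine ((hasDerivAt_const t c).div hsqrt hs).congr_deriv ?_
  simp only [cubicDecay, Function.comp_apply]
  field_simp
  rw [hsq]
  ring

theorem abs_cubicDecay_le (c : ℝ) {t : ℝ} (ht : 0 < t) :
    |cubicDecay c t| ≤ 1 / √(exp (2 * t) - 1) := by
  have he : 0 < exp (2 * t) - 1 := by linarith [add_one_lt_exp (by positivity : 2 * t ≠ 0)]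
  have hD := one_le_cubicDecayDenom c ht.le
  rw [cubicDecay, abs_div, abs_of_nonneg (sqrt_nonneg _),
    div_le_div_iff₀ (by positivity) (sqrt_pos.2 he), one_mul, ← sqrt_sq_eq_abs,
    ← sqrt_mul (sq_nonneg c)]
  refine sqrt_le_sqrt ?_
  unfold cubicDecayDenom
  nlinarith

theorem cubicDecay_mem_uIcc (c : ℝ) {t : ℝ} (ht : 0 ≤ t) : cubicDecay c t ∈ uIcc 0 c := by
  have hs : 1 ≤ √(cubicDecayDenom c t) := one_le_sqrt.2 (one_le_cubicDecayDenom c ht)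
  have hs₀ : 0 < √(cubicDecayDenom c t) := one_pos.trans_le hs
  rw [cubicDecay, mem_uIcc]
  rcases le_total 0 c with hc | hc
  · exact Or.inl ⟨div_nonneg hc hs₀.le, div_le_self hc hs⟩
  · refine Or.inr ⟨?_, div_nonpos_of_nonpos_of_nonneg hc hs₀.le⟩
    rw [le_div_iff₀ hs₀]
    nlinarith

/-- Explicit solution, uniqueness and bounds for x' = X₃(x∞ - x) on ℝ₊. -/
theorem reach_autonomous_solution (x₀ xinf : ℝ) (xsol : ℝ → ℝ)
    (hxsol : ∀ t, xsol t = xinf + (x₀ - xinf) /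
      Real.sqrt ((Real.exp (2 * t) - 1) * (1 + (x₀ - xinf)^2) + 1)) :
    (xsol 0 = x₀ ∧
      ∀ t ≥ (0:ℝ), HasDerivAt xsol ((xinf - xsol t) + (xinf - xsol t)^3) t) ∧
    (∀ x : ℝ → ℝ, x 0 = x₀ →
      (∀ t ≥ (0:ℝ), HasDerivAt x ((xinf - x t) + (xinf - x t)^3) t) →
      ∀ t ≥ (0:ℝ), x t = xsol t) ∧
    (∀ t > (0:ℝ), |xsol t - xinf| ≤ 1 / Real.sqrt (Real.exp (2 * t) - 1)) ∧
    (∀ t ≥ (0:ℝ), min 0 (x₀ - xinf) ≤ xsol t - xinf ∧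
      xsol t - xinf ≤ max 0 (x₀ - xinf)) := by
  have hxsol' : xsol = fun t => xinf + cubicDecay (x₀ - xinf) t := funext hxsol
  have hx0 : xsol 0 = x₀ := by simp [hxsol', cubicDecay_zero]
  have hderiv : ∀ t ≥ (0:ℝ), HasDerivAt xsol ((xinf - xsol t) + (xinf - xsol t) ^ 3) t := by
    intro t ht
    have hD := one_pos.trans_le (one_le_cubicDecayDenom (x₀ - xinf) ht)
    rw [hxsol']
    exact ((hasDerivAt_cubicDecay _ hD).const_add xinf).congr_deriv (by ring)
  refine ⟨⟨hx0, hderiv⟩, fun x hx₀ hx => ?_, fun t ht => ?_, fun t ht => ?_⟩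
  · exact eq_of_hasDerivAt_of_antitone (antitone_sub_add_sub_pow_three xinf) hx hderiv
      (hx₀.trans hx0.symm)
  · rw [hxsol', add_sub_cancel_left]
    exact abs_cubicDecay_le (x₀ - xinf) ht
  · rw [hxsol', add_sub_cancel_left]
    exact cubicDecay_mem_uIcc (x₀ - xinf) ht
end
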